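/- arXiv:2005.03572 — 7 statements merged into one kernel-verified Lean document; each statement's English description precedes it below -/
import Mathlib

section
/- Let N : ℕ and let X : Fin N → Fin N → Bool be strictly upper triangular (X i j = false whenever j ≤ i). Then the Cluster-NMS iterate after N iterations, starting from the all-ones vector, equals the original-NMS keep vector: step^[N] (fun _ => true) = nms. (Proposition 1 of the paper: Cluster-NMS with T = N iterations produces exactly the same suppression result as original NMS.) -/
/-- The Cluster-NMS update: `(clusterStep X b) j = true` iff there is no index `i`
with `b i = true` and `X i j = true`. -/
def clusterStep {N : ℕ} (X : Fin N → Fin N → Bool) (b : Fin N → Bool) : Fin N → Bool :=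
  fun j => decide (¬ ∃ i : Fin N, b i = true ∧ X i j = true)

/-- Auxiliary strong recursion for original NMS: box `n` is kept iff there is no
kept box `m < n` with `X m n = true`. -/
def origNMSAux {N : ℕ} (X : Fin N → Fin N → Bool) : (n : ℕ) → n < N → Bool :=
  fun n hn =>
    decide (∀ m : Fin n,
      ¬ (origNMSAux X m.1 (m.2.trans hn) = true ∧ X ⟨m.1, m.2.trans hn⟩ ⟨n, hn⟩ = true))
termination_by n => n
decreasing_by all_goals exact Fin.is_lt _

/-- The original-NMS keep vector: `origNMS X j = true` iff there is no `i < j`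
with `origNMS X i = true` and `X i j = true`. -/
def origNMS {N : ℕ} (X : Fin N → Fin N → Bool) : Fin N → Bool :=
  fun j => origNMSAux X j.1 j.2

/-!
Strict upper triangularity makes `(clusterStep X b) j` depend only on the entries `b i` with
`i < j`, and `origNMS X` is a fixed point of `clusterStep X`. Hence if `b` agrees with
`origNMS X` below `t`, then `clusterStep X b` agrees with it below `t + 1`. So after `N` steps
every starting vector, in particular the all-ones one, has been driven to `origNMS X`.
-/

variable {N : ℕ} {X : Fin N → Fin N → Bool}

theorem origNMS_apply (X : Fin N → Fin N → Bool) (j : Fin N) :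
    origNMS X j = decide (¬ ∃ i : Fin N, i < j ∧ origNMS X i = true ∧ X i j = true) := by
  change origNMSAux X j.1 j.2 = _
  rw [origNMSAux, decide_eq_decide]
  constructor
  · rintro h ⟨i, hij, hi, hXij⟩
    exact h ⟨i.1, hij⟩ ⟨hi, hXij⟩
  · rintro h ⟨m, hm⟩ ⟨hm_kept, hXmj⟩
    exact h ⟨⟨m, hm.trans j.2⟩, hm, hm_kept, hXmj⟩

theorem clusterStep_apply_of_triangular (hX : ∀ i j : Fin N, j ≤ i → X i j = false)
    (b : Fin N → Bool) (j : Fin N) :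
    clusterStep X b j = decide (¬ ∃ i : Fin N, i < j ∧ b i = true ∧ X i j = true) := by
  rw [clusterStep, decide_eq_decide]
  refine not_congr ⟨fun ⟨i, hi, hXij⟩ => ⟨i, ?_, hi, hXij⟩, fun ⟨i, _, hi, hXij⟩ => ⟨i, hi, hXij⟩⟩
  by_contra! hji
  simp [hX i j hji] at hXij

theorem clusterStep_congr_of_triangular (hX : ∀ i j : Fin N, j ≤ i → X i j = false)
    {b b' : Fin N → Bool} {j : Fin N} (h : ∀ i < j, b i = b' i) :
    clusterStep X b j = clusterStep X b' j := by
  simp only [clusterStep_apply_of_triangular hX, decide_eq_decide]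
  exact not_congr <| exists_congr fun i => and_congr_right fun hij => by rw [h i hij]

theorem clusterStep_origNMS (hX : ∀ i j : Fin N, j ≤ i → X i j = false) :
    clusterStep X (origNMS X) = origNMS X := by
  funext j
  rw [clusterStep_apply_of_triangular hX, ← origNMS_apply]

theorem iterate_clusterStep_apply_eq_origNMS (hX : ∀ i j : Fin N, j ≤ i → X i j = false)
    (b : Fin N → Bool) (t : ℕ) {j : Fin N} (hj : j.1 < t) :
    (clusterStep X)^[t] b j = origNMS X j := by
  induction t generalizing j with
  | zero => omega
  | succ t ih =>
    rw [Function.iterate_succ_apply', ← clusterStep_origNMS hX]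
    exact clusterStep_congr_of_triangular hX fun i hij =>
      ih (Nat.lt_of_lt_of_le hij (Nat.le_of_lt_succ hj))

/-- Proposition 1: for a strictly upper triangular Boolean IoU matrix `X`, the
Cluster-NMS iterate after `N` iterations (starting from the all-ones vector)
equals the original-NMS keep vector. -/
theorem clusterNMS_eq_origNMS {N : ℕ} (X : Fin N → Fin N → Bool)
    (hX : ∀ i j : Fin N, j ≤ i → X i j = false) :
    (clusterStep X)^[N] (fun _ => true) = origNMS X := by
  funext j
  exact iterate_clusterStep_apply_eq_origNMS hX _ N j.2
end

section
/- Let N : ℕ and let X : Fin N → Fin N → Bool be strictly upper triangular. Then for every k ≤ N, every t ≥ k, and every index j : Fin N with (j : ℕ) < k, the Cluster-NMS iterate agrees with original NMS on the first k entries: (step^[t] (fun _ => true)) j = nms j. (The inductive prefix claim in the proof of Proposition 1: after k iterations the first k entries are exactly the original NMS result, and they remain stable thereafter.) -/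
/-
If the keep vector `b` already agrees with original NMS on all indices `i < j`, then
`clusterStep X b` agrees with it at `j` too: by strict upper triangularity only the entries
`b i` with `i < j` can suppress box `j`. By strong induction on `j`, the `t`-th iterate from
any initial vector therefore agrees with original NMS at every index `j < t`.
-/

section

variable {N : ℕ} (X : Fin N → Fin N → Bool)

theorem clusterStep_eq_true_iff (b : Fin N → Bool) (j : Fin N) :
    clusterStep X b j = true ↔ ∀ i, b i = true → X i j = false := by
  simp [clusterStep]

theorem origNMS_eq_true_iff (j : Fin N) :
    origNMS X j = true ↔ ∀ i < j, origNMS X i = true → X i j = false := by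
  rw [origNMS, origNMSAux, decide_eq_true_iff]
  constructor
  · intro h i hij hi
    exact Bool.eq_false_iff.mpr fun hX => h ⟨i, hij⟩ ⟨hi, hX⟩
  · rintro h m ⟨hm, hXm⟩
    simp [h ⟨m, m.2.trans j.2⟩ m.2 hm] at hXm

variable {X}

theorem clusterStep_apply_eq_origNMS {b : Fin N → Bool} {j : Fin N}
    (hX : ∀ i, j ≤ i → X i j = false) (hb : Set.EqOn b (origNMS X) (Set.Iio j)) :
    clusterStep X b j = origNMS X j := by
  rw [Bool.eq_iff_iff, clusterStep_eq_true_iff, origNMS_eq_true_iff]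
  refine forall_congr' fun i => ?_
  rcases lt_or_ge i j with hij | hji
  · simp [hij, hb hij]
  · simp [hX i hji]

theorem iterate_clusterStep_eq_origNMS (hX : ∀ i j : Fin N, j ≤ i → X i j = false)
    (b : Fin N → Bool) (j : Fin N) {t : ℕ} (hjt : (j : ℕ) < t) :
    (clusterStep X)^[t] b j = origNMS X j := by
  induction j using WellFoundedLT.induction generalizing t with
  | ind j ih =>
    obtain ⟨s, rfl⟩ : ∃ s, t = s + 1 := Nat.exists_eq_succ_of_ne_zero (by omega)
    rw [Function.iterate_succ_apply']
    exact clusterStep_apply_eq_origNMS (hX · j)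
      fun i (hij : i < j) => ih i hij (lt_of_lt_of_le hij (Nat.lt_succ_iff.mp hjt))

end

/-- The inductive prefix claim in the proof of Proposition 1: for strictly upper
triangular `X`, for every `k ≤ N` and every `t ≥ k`, the Cluster-NMS iterate
after `t` iterations agrees with original NMS on the first `k` entries. -/
theorem clusterNMS_prefix_eq_origNMS {N : ℕ} (X : Fin N → Fin N → Bool)
    (hX : ∀ i j : Fin N, j ≤ i → X i j = false) :
    ∀ k ≤ N, ∀ t ≥ k, ∀ j : Fin N, (j : ℕ) < k →
      (clusterStep X)^[t] (fun _ => true) j = origNMS X j := by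
  intro k _ t hkt j hjk
  exact iterate_clusterStep_eq_origNMS hX _ j (lt_of_lt_of_le hjk hkt)
end

section
/- Let N : ℕ and let X : Fin N → Fin N → Bool be strictly upper triangular. If b : Fin N → Bool is a fixed point of the Cluster-NMS update, i.e., step b = b, then b = nms. In particular, the early-stopping rule of the Cluster-NMS algorithm is correct: if the iterates satisfy bᵗ = bᵗ⁻¹ at some iteration t ≥ 1, then bᵗ equals the original NMS result. -/
/-! Under strict upper triangularity, `(clusterStep X b) j` only depends on the values of `b`
below `j`, so a fixed point of `clusterStep X` obeys the same strong recursion that defines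
`origNMS X`; by well-founded induction that recursion has only one solution. Early stopping is
the fixed-point statement for `b = (clusterStep X)^[t - 1] (fun _ => true)`. -/

theorem eq_of_greedy_recursion {α : Type*} [LT α] [WellFoundedLT α] (R : α → α → Bool)
    {b c : α → Bool} (hb : ∀ j, b j = true ↔ ∀ i < j, b i = true → R i j = false)
    (hc : ∀ j, c j = true ↔ ∀ i < j, c i = true → R i j = false) : b = c := by
  funext j
  induction j using WellFoundedLT.induction with
  | ind j ih =>
    rw [Bool.eq_iff_iff, hb, hc]
    exact forall₂_congr fun i hij => by rw [ih i hij]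

section

variable {N : ℕ} (X : Fin N → Fin N → Bool)

theorem clusterStep_eq_true_iff_of_triangular (hX : ∀ i j : Fin N, j ≤ i → X i j = false)
    (b : Fin N → Bool) (j : Fin N) :
    clusterStep X b j = true ↔ ∀ i < j, b i = true → X i j = false := by
  simp only [clusterStep, decide_eq_true_iff, not_exists, not_and, Bool.not_eq_true]
  exact ⟨fun h i _ => h i, fun h i => (lt_or_ge i j).elim (h i) fun hji _ => hX i j hji⟩

theorem eq_origNMS_of_clusterStep_eq (hX : ∀ i j : Fin N, j ≤ i → X i j = false)
    {b : Fin N → Bool} (hb : clusterStep X b = b) : b = origNMS X :=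
  eq_of_greedy_recursion X
    (fun j => by rw [← clusterStep_eq_true_iff_of_triangular X hX, hb])
    (origNMS_eq_true_iff X)

end

/-- For a strictly upper triangular Boolean IoU matrix `X`, every fixed point of the
Cluster-NMS update equals the original-NMS keep vector; in particular, the
early-stopping rule of Cluster-NMS is correct: if the iterate does not change at
some iteration `t ≥ 1`, then it equals the original NMS result. -/
theorem clusterNMS_fixedPoint_unique {N : ℕ} (X : Fin N → Fin N → Bool)
    (hX : ∀ i j : Fin N, j ≤ i → X i j = false) :
    (∀ b : Fin N → Bool, clusterStep X b = b → b = origNMS X) ∧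
    (∀ t : ℕ, 1 ≤ t →
      (clusterStep X)^[t] (fun _ => true) = (clusterStep X)^[t - 1] (fun _ => true) →
      (clusterStep X)^[t] (fun _ => true) = origNMS X) := by
  refine ⟨fun b => eq_origNMS_of_clusterStep_eq X hX, fun t ht hfix => ?_⟩
  obtain ⟨s, rfl⟩ := Nat.exists_eq_add_of_le' ht
  rw [Nat.add_sub_cancel, Function.iterate_succ_apply'] at hfix
  rw [Function.iterate_succ_apply', hfix]
  exact eq_origNMS_of_clusterStep_eq X hX hfix
end

section
/- Let N : ℕ and let X : Fin N → Fin N → Bool be strictly upper triangular. Then Fast NMS over-suppresses relative to original NMS: for every j : Fin N, if (step (fun _ => true)) j = true then nms j = true. Equivalently, the set of boxes kept by Fast NMS (one application of the Cluster-NMS update to the all-ones vector) is contained in the set of boxes kept by original NMS. -/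
/-
Original NMS only lets *kept* earlier boxes suppress `j`, whereas Fast NMS lets every box
suppress it. So the update applied to the all-ones vector is at most the update applied to the
NMS keep vector (the update is antitone), and that is at most the NMS keep vector itself.
-/

section

variable {N : ℕ} (X : Fin N → Fin N → Bool)

theorem clusterStep_antitone : Antitone (clusterStep X) := by
  intro b b' hbb' j hj
  rw [clusterStep_eq_true_iff] at hj ⊢
  exact fun i hi => hj i (hbb' i hi)

theorem clusterStep_origNMS_le : clusterStep X (origNMS X) ≤ origNMS X := by
  intro j hj
  rw [clusterStep_eq_true_iff] at hj
  exact (origNMS_eq_true_iff X j).2 fun i _ => hj i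

end

theorem fastNMS_le_origNMS_general {N : ℕ} (X : Fin N → Fin N → Bool) :
    ∀ j : Fin N, clusterStep X (fun _ => true) j = true → origNMS X j = true :=
  fun j hj => clusterStep_origNMS_le X j (clusterStep_antitone X le_top j hj)

/-- Fast NMS (one application of the Cluster-NMS update to the all-ones vector)
over-suppresses relative to original NMS: every box kept by Fast NMS is also kept
by original NMS. -/
theorem fastNMS_le_origNMS {N : ℕ} (X : Fin N → Fin N → Bool)
    (hX : ∀ i j : Fin N, j ≤ i → X i j = false) :
    ∀ j : Fin N, clusterStep X (fun _ => true) j = true → origNMS X j = true :=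
  fastNMS_le_origNMS_general X
end

section
/- The CIoU loss is invariant to the scale of the regression problem: for any two axis-aligned boxes B, B' and any λ > 0, writing λB for the box whose four coordinates are λ times those of B, one has IoU(λB, λB') = IoU(B, B'), D(λB, λB') = D(B, B'), V(λB, λB') = V(B, B'), and consequently L_CIoU(λB, λB') = L_CIoU(B, B'). -/
/-- An axis-aligned box `(a₁, b₁, a₂, b₂)` with `a₁ < a₂` and `b₁ < b₂`. -/
structure Box where
  a₁ : ℝ
  b₁ : ℝ
  a₂ : ℝ
  b₂ : ℝ
  ha : a₁ < a₂
  hb : b₁ < b₂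

namespace Box

/-- Area of a box. -/
def area (B : Box) : ℝ := (B.a₂ - B.a₁) * (B.b₂ - B.b₁)

/-- Width of a box. -/
def width (B : Box) : ℝ := B.a₂ - B.a₁

/-- Height of a box. -/
def height (B : Box) : ℝ := B.b₂ - B.b₁

/-- Center point of a box. -/
noncomputable def center (B : Box) : ℝ × ℝ := ((B.a₁ + B.a₂) / 2, (B.b₁ + B.b₂) / 2)

/-- Intersection area of two boxes. -/
noncomputable def inter (B B' : Box) : ℝ :=
  max 0 (min B.a₂ B'.a₂ - max B.a₁ B'.a₁) * max 0 (min B.b₂ B'.b₂ - max B.b₁ B'.b₁)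

/-- Union area of two boxes. -/
noncomputable def unionArea (B B' : Box) : ℝ := B.area + B'.area - inter B B'

/-- Intersection over union of two boxes. -/
noncomputable def iou (B B' : Box) : ℝ := inter B B' / unionArea B B'

/-- Area of the smallest enclosing box of two boxes. -/
noncomputable def encArea (B B' : Box) : ℝ :=
  (max B.a₂ B'.a₂ - min B.a₁ B'.a₁) * (max B.b₂ B'.b₂ - min B.b₁ B'.b₁)

/-- Squared diagonal length of the smallest enclosing box of two boxes. -/
noncomputable def c2 (B B' : Box) : ℝ :=
  (max B.a₂ B'.a₂ - min B.a₁ B'.a₁) ^ 2 + (max B.b₂ B'.b₂ - min B.b₁ B'.b₁) ^ 2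

/-- Squared Euclidean distance `ρ²` between the centers of two boxes. -/
noncomputable def rho2 (B B' : Box) : ℝ :=
  ((B.center).1 - (B'.center).1) ^ 2 + ((B.center).2 - (B'.center).2) ^ 2

/-- Normalized central point distance `D = ρ²/c²`. -/
noncomputable def dterm (B B' : Box) : ℝ := rho2 B B' / c2 B B'

/-- Aspect-ratio consistency term `V` of the CIoU loss. -/
noncomputable def vterm (B B' : Box) : ℝ :=
  4 / Real.pi ^ 2 *
    (Real.arctan (B'.width / B'.height) - Real.arctan (B.width / B.height)) ^ 2

/-- Trade-off parameter `α` of the CIoU loss. -/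
noncomputable def alpha (B B' : Box) : ℝ :=
  if iou B B' < 1 / 2 then 0 else vterm B B' / ((1 - iou B B') + vterm B B')

/-- The CIoU loss. -/
noncomputable def ciouLoss (B B' : Box) : ℝ :=
  1 - iou B B' + dterm B B' + alpha B B' * vterm B B'

/-- The IoU loss. -/
noncomputable def iouLoss (B B' : Box) : ℝ := 1 - iou B B'

/-- The GIoU loss. -/
noncomputable def giouLoss (B B' : Box) : ℝ :=
  1 - iou B B' + (encArea B B' - unionArea B B') / encArea B B'

end Box

/-- The box obtained by multiplying all four coordinates of `B` by `l > 0`. -/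
def Box.smul (l : ℝ) (hl : 0 < l) (B : Box) : Box :=
  ⟨l * B.a₁, l * B.b₁, l * B.a₂, l * B.b₂,
    mul_lt_mul_of_pos_left B.ha hl, mul_lt_mul_of_pos_left B.hb hl⟩

/-! Every ingredient of the loss is a ratio of two quantities that are homogeneous of the same
degree in the coordinates (areas and squared lengths of degree 2, the aspect ratio of degree 0),
and multiplication by `λ > 0` commutes with `min` and `max`. -/

lemma max_zero_min_sub_max_mul {l : ℝ} (hl : 0 ≤ l) (a b c d : ℝ) :
    max 0 (min (l * a) (l * b) - max (l * c) (l * d)) = l * max 0 (min a b - max c d) := by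
  rw [← mul_min_of_nonneg _ _ hl, ← mul_max_of_nonneg _ _ hl, ← mul_sub, ← mul_zero l,
    ← mul_max_of_nonneg _ _ hl, mul_zero]

lemma max_sub_min_mul {l : ℝ} (hl : 0 ≤ l) (a b c d : ℝ) :
    max (l * a) (l * b) - min (l * c) (l * d) = l * (max a b - min c d) := by
  rw [← mul_max_of_nonneg _ _ hl, ← mul_min_of_nonneg _ _ hl, mul_sub]

namespace Box

variable (l : ℝ) (hl : 0 < l) (B B' : Box)

lemma smul_area : (smul l hl B).area = l ^ 2 * B.area := by
  simp only [area, smul]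
  ring

lemma smul_inter : inter (smul l hl B) (smul l hl B') = l ^ 2 * inter B B' := by
  simp only [inter, smul, max_zero_min_sub_max_mul hl.le]
  ring

lemma smul_unionArea : unionArea (smul l hl B) (smul l hl B') = l ^ 2 * unionArea B B' := by
  simp only [unionArea, smul_area, smul_inter]
  ring

lemma smul_rho2 : rho2 (smul l hl B) (smul l hl B') = l ^ 2 * rho2 B B' := by
  simp only [rho2, center, smul]
  ring

lemma smul_c2 : c2 (smul l hl B) (smul l hl B') = l ^ 2 * c2 B B' := by
  simp only [c2, smul, max_sub_min_mul hl.le]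
  ring

lemma smul_width : (smul l hl B).width = l * B.width := by
  simp only [width, smul, mul_sub]

lemma smul_height : (smul l hl B).height = l * B.height := by
  simp only [height, smul, mul_sub]

lemma smul_iou : iou (smul l hl B) (smul l hl B') = iou B B' := by
  rw [iou, iou, smul_inter, smul_unionArea, mul_div_mul_left _ _ (pow_ne_zero 2 hl.ne')]

lemma smul_dterm : dterm (smul l hl B) (smul l hl B') = dterm B B' := by
  rw [dterm, dterm, smul_rho2, smul_c2, mul_div_mul_left _ _ (pow_ne_zero 2 hl.ne')]

lemma smul_width_div_height : (smul l hl B).width / (smul l hl B).height = B.width / B.height := by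
  rw [smul_width, smul_height, mul_div_mul_left _ _ hl.ne']

lemma smul_vterm : vterm (smul l hl B) (smul l hl B') = vterm B B' := by
  rw [vterm, vterm, smul_width_div_height, smul_width_div_height]

lemma smul_alpha : alpha (smul l hl B) (smul l hl B') = alpha B B' := by
  rw [alpha, alpha, smul_iou, smul_vterm]

end Box

/-- The CIoU loss is invariant to the scale of the regression problem: scaling both
boxes by any `λ > 0` leaves `IoU`, `D`, `V`, and hence `L_CIoU` unchanged. -/
theorem ciou_scale_invariant (B B' : Box) (l : ℝ) (hl : 0 < l) :
    Box.iou (Box.smul l hl B) (Box.smul l hl B') = Box.iou B B' ∧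
    Box.dterm (Box.smul l hl B) (Box.smul l hl B') = Box.dterm B B' ∧
    Box.vterm (Box.smul l hl B) (Box.smul l hl B') = Box.vterm B B' ∧
    Box.ciouLoss (Box.smul l hl B) (Box.smul l hl B') = Box.ciouLoss B B' := by
  refine ⟨Box.smul_iou l hl B B', Box.smul_dterm l hl B B', Box.smul_vterm l hl B B', ?_⟩
  rw [Box.ciouLoss, Box.ciouLoss, Box.smul_iou, Box.smul_dterm, Box.smul_alpha, Box.smul_vterm]
end

section
/- If one axis-aligned box is contained in another (coordinatewise: a₁' ≤ a₁, b₁' ≤ b₁, a₂ ≤ a₂', b₂ ≤ b₂'), then the smallest enclosing box C equals the larger box B', the intersection area equals area(B), the union area equals area(B') = area(C), the GIoU penalty term (|C| − U)/|C| is zero, and hence L_GIoU(B,B') = L_IoU(B,B') = 1 − area(B)/area(B'). (The paper's analysis that when two boxes have an inclusion relationship, |C − A∪B| = 0 and GIoU loss degrades to IoU loss.) -/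
theorem overlap_eq_of_le_of_le {α : Type*} [AddCommGroup α] [LinearOrder α]
    [IsOrderedAddMonoid α] {x₁ x₂ y₁ y₂ : α} (hx : x₁ ≤ x₂) (h₁ : y₁ ≤ x₁) (h₂ : x₂ ≤ y₂) :
    max 0 (min x₂ y₂ - max x₁ y₁) = x₂ - x₁ := by
  rw [min_eq_left h₂, max_eq_left h₁, max_eq_right (sub_nonneg.mpr hx)]

theorem span_eq_of_le_of_le {α : Type*} [LinearOrder α] [Sub α]
    {x₁ x₂ y₁ y₂ : α} (h₁ : y₁ ≤ x₁) (h₂ : x₂ ≤ y₂) :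
    max x₂ y₂ - min x₁ y₁ = y₂ - y₁ := by
  rw [max_eq_right h₂, min_eq_right h₁]

namespace Box

variable {B B' : Box}

theorem inter_eq_area_of_le (h1 : B'.a₁ ≤ B.a₁) (h2 : B'.b₁ ≤ B.b₁) (h3 : B.a₂ ≤ B'.a₂)
    (h4 : B.b₂ ≤ B'.b₂) : inter B B' = B.area := by
  rw [inter, area, overlap_eq_of_le_of_le B.ha.le h1 h3, overlap_eq_of_le_of_le B.hb.le h2 h4]

theorem encArea_eq_area_of_le (h1 : B'.a₁ ≤ B.a₁) (h2 : B'.b₁ ≤ B.b₁) (h3 : B.a₂ ≤ B'.a₂)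
    (h4 : B.b₂ ≤ B'.b₂) : encArea B B' = B'.area := by
  rw [encArea, area, span_eq_of_le_of_le h1 h3, span_eq_of_le_of_le h2 h4]

theorem unionArea_eq_area_right_of_inter_eq (h : inter B B' = B.area) :
    unionArea B B' = B'.area := by
  rw [unionArea, h, add_sub_cancel_left]

end Box

/-- If box `B` is contained in box `B'` coordinatewise, then the smallest enclosing
box `C` equals `B'`, the intersection area equals `area B`, the union area equals
`area B' = |C|`, the GIoU penalty term vanishes, and `L_GIoU = L_IoU = 1 − area B / area B'`. -/
theorem giou_degrades_to_iou_of_inclusion (B B' : Box)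
    (h1 : B'.a₁ ≤ B.a₁) (h2 : B'.b₁ ≤ B.b₁) (h3 : B.a₂ ≤ B'.a₂) (h4 : B.b₂ ≤ B'.b₂) :
    (min B.a₁ B'.a₁ = B'.a₁ ∧ min B.b₁ B'.b₁ = B'.b₁ ∧
      max B.a₂ B'.a₂ = B'.a₂ ∧ max B.b₂ B'.b₂ = B'.b₂) ∧
    Box.inter B B' = B.area ∧
    Box.unionArea B B' = B'.area ∧ B'.area = Box.encArea B B' ∧
    (Box.encArea B B' - Box.unionArea B B') / Box.encArea B B' = 0 ∧
    Box.giouLoss B B' = Box.iouLoss B B' ∧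
    Box.iouLoss B B' = 1 - B.area / B'.area := by
  have hinter := Box.inter_eq_area_of_le h1 h2 h3 h4
  have hunion := Box.unionArea_eq_area_right_of_inter_eq hinter
  have henc := Box.encArea_eq_area_of_le h1 h2 h3 h4
  have hpenalty : (Box.encArea B B' - Box.unionArea B B') / Box.encArea B B' = 0 := by
    rw [henc, hunion, sub_self, zero_div]
  refine ⟨⟨min_eq_right h1, min_eq_right h2, max_eq_right h3, max_eq_right h4⟩,
    hinter, hunion, henc.symm, hpenalty, ?_, ?_⟩
  · rw [Box.giouLoss, hpenalty, add_zero, Box.iouLoss]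
  · rw [Box.iouLoss, Box.iou, hinter, hunion]
end

section
/- If two axis-aligned boxes B and B' do not overlap (their intersection area I is zero), then their center points are distinct, so the normalized central point distance satisfies D = ρ²/c² > 0; moreover in this case IoU = 0 < 1/2, hence α = 0 and L_CIoU(B,B') = 1 + D > 1 = L_IoU(B,B'). (The paper's claim that, unlike IoU loss, the CIoU loss provides a moving direction for non-overlapping boxes: its penalty term is strictly positive whenever the boxes are disjoint.) -/
/-!
Each box contains its center in its open interior, so boxes with a common center share an
interior point and overlap with positive area. Disjoint boxes therefore have distinct centers,
making `ρ² > 0`, while `c² > 0` for any pair of boxes; hence `D > 0`. Zero overlap also gives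
`IoU = 0 < 1/2`, which switches the aspect-ratio term off (`α = 0`).
-/

lemma min_sub_max_pos_of_mem_Ioo {x₁ x₂ y₁ y₂ t : ℝ} (hx : t ∈ Set.Ioo x₁ x₂) (hy : t ∈ Set.Ioo y₁ y₂) :
    0 < min x₂ y₂ - max x₁ y₁ :=
  sub_pos.mpr <| (max_lt hx.1 hy.1).trans (lt_min hx.2 hy.2)

namespace Box

variable (B B' : Box)

lemma center_fst_mem : B.center.1 ∈ Set.Ioo B.a₁ B.a₂ :=
  ⟨left_lt_add_div_two.mpr B.ha, add_div_two_lt_right.mpr B.ha⟩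

lemma center_snd_mem : B.center.2 ∈ Set.Ioo B.b₁ B.b₂ :=
  ⟨left_lt_add_div_two.mpr B.hb, add_div_two_lt_right.mpr B.hb⟩

lemma inter_pos_of_center_eq (h : B.center = B'.center) : 0 < inter B B' := by
  have hx := min_sub_max_pos_of_mem_Ioo B.center_fst_mem (h ▸ B'.center_fst_mem)
  have hy := min_sub_max_pos_of_mem_Ioo B.center_snd_mem (h ▸ B'.center_snd_mem)
  rw [inter, max_eq_right hx.le, max_eq_right hy.le]
  exact mul_pos hx hy

lemma center_ne_of_inter_eq_zero (h : inter B B' = 0) : B.center ≠ B'.center :=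
  fun hc => (B.inter_pos_of_center_eq B' hc).ne' h

lemma c2_pos : 0 < c2 B B' := by
  have : 0 < max B.a₂ B'.a₂ - min B.a₁ B'.a₁ :=
    sub_pos.mpr <| (min_le_left _ _).trans_lt (B.ha.trans_le (le_max_left _ _))
  unfold c2
  positivity

lemma rho2_pos_of_center_ne (h : B.center ≠ B'.center) : 0 < rho2 B B' := by
  unfold rho2
  rcases eq_or_ne B.center.1 B'.center.1 with h₁ | h₁
  · have h₂ : B.center.2 - B'.center.2 ≠ 0 := sub_ne_zero.mpr fun h₂ => h (Prod.ext h₁ h₂)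
    positivity
  · have h₁ : B.center.1 - B'.center.1 ≠ 0 := sub_ne_zero.mpr h₁
    positivity

lemma dterm_pos_of_center_ne (h : B.center ≠ B'.center) : 0 < dterm B B' :=
  div_pos (B.rho2_pos_of_center_ne B' h) (B.c2_pos B')

lemma iou_eq_zero_of_inter_eq_zero (h : inter B B' = 0) : iou B B' = 0 := by
  rw [iou, h, zero_div]

lemma alpha_eq_zero_of_iou_lt (h : iou B B' < 1 / 2) : alpha B B' = 0 :=
  if_pos h

end Box

/-- If two boxes do not overlap (intersection area zero), then their centers are
distinct, the normalized central point distance `D` is strictly positive,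
`IoU = 0 < 1/2` so `α = 0`, and `L_CIoU = 1 + D > 1 = L_IoU`: the CIoU loss
provides a moving direction for non-overlapping boxes. -/
theorem ciou_positive_penalty_of_disjoint (B B' : Box) (h : Box.inter B B' = 0) :
    B.center ≠ B'.center ∧
    0 < Box.dterm B B' ∧
    Box.iou B B' = 0 ∧
    Box.alpha B B' = 0 ∧
    Box.ciouLoss B B' = 1 + Box.dterm B B' ∧
    Box.iouLoss B B' = 1 ∧
    Box.iouLoss B B' < Box.ciouLoss B B' := by
  have hcenter := B.center_ne_of_inter_eq_zero B' h
  have hD := B.dterm_pos_of_center_ne B' hcenter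
  have hiou := B.iou_eq_zero_of_inter_eq_zero B' h
  have hα := B.alpha_eq_zero_of_iou_lt B' (by norm_num [hiou])
  have hL : Box.iouLoss B B' = 1 := by rw [Box.iouLoss, hiou, sub_zero]
  have hC : Box.ciouLoss B B' = 1 + Box.dterm B B' := by
    rw [Box.ciouLoss, hiou, hα]
    ring
  exact ⟨hcenter, hD, hiou, hα, hC, hL, by linarith⟩
end
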